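/- Every directed path a in Y satisfies exactly one of the following three conditions: (a) a passes above Q₁, i.e. a₂(t) ≥ 4/5 whenever a₁(t) ∈ (1/5, 2/5); (b) a passes below Q₂, i.e. a₂(t) ≤ 1/5 whenever a₁(t) ∈ (3/5, 4/5); (c) a passes below Q₁ and above Q₂, i.e. a₂(t) ≤ 3/5 whenever a₁(t) ∈ (1/5, 2/5), and a₂(t) ≥ 2/5 whenever a₁(t) ∈ (3/5, 4/5). (The trichotomy underlying the computation in 2.2(a) that the fundamental category of the space with two simultaneous obstructions has exactly three arrows 0 → 1.) -/
import Mathlib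


open Set

/-- A directed path in `[0,1]²` avoiding `Q`, with nondecreasing coordinates,
from `(0,0)` to `(1,1)`. -/
def DiPath (Q : Set (ℝ × ℝ)) (a : ℝ → ℝ × ℝ) : Prop :=
  ContinuousOn a (Icc 0 1) ∧
  (∀ t ∈ Icc (0:ℝ) 1, a t ∈ Icc (0:ℝ) 1 ×ˢ Icc (0:ℝ) 1) ∧
  (∀ t ∈ Icc (0:ℝ) 1, a t ∉ Q) ∧
  MonotoneOn (fun t => (a t).1) (Icc 0 1) ∧
  MonotoneOn (fun t => (a t).2) (Icc 0 1) ∧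
  a 0 = (0, 0) ∧ a 1 = (1, 1)

/-- The first simultaneous obstruction `Q₁ = (1/5, 2/5) × (3/5, 4/5)`. -/
def Q1 : Set (ℝ × ℝ) := Ioo (1/5 : ℝ) (2/5) ×ˢ Ioo (3/5 : ℝ) (4/5)

/-- The second simultaneous obstruction `Q₂ = (3/5, 4/5) × (1/5, 2/5)`. -/
def Q2 : Set (ℝ × ℝ) := Ioo (3/5 : ℝ) (4/5) ×ˢ Ioo (1/5 : ℝ) (2/5)

/-- `a` passes above `Q₁`. -/
def AboveQ1 (a : ℝ → ℝ × ℝ) : Prop :=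
  ∀ t ∈ Icc (0:ℝ) 1, (a t).1 ∈ Ioo (1/5 : ℝ) (2/5) → (a t).2 ≥ 4/5

/-- `a` passes below `Q₂`. -/
def BelowQ2 (a : ℝ → ℝ × ℝ) : Prop :=
  ∀ t ∈ Icc (0:ℝ) 1, (a t).1 ∈ Ioo (3/5 : ℝ) (4/5) → (a t).2 ≤ 1/5

/-- `a` passes below `Q₁` and above `Q₂` (the middle way). -/
def MiddleWay (a : ℝ → ℝ × ℝ) : Prop :=
  (∀ t ∈ Icc (0:ℝ) 1, (a t).1 ∈ Ioo (1/5 : ℝ) (2/5) → (a t).2 ≤ 3/5) ∧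
  (∀ t ∈ Icc (0:ℝ) 1, (a t).1 ∈ Ioo (3/5 : ℝ) (4/5) → (a t).2 ≥ 2/5)

/-- Every directed path in `Y = [0,1]² \ (Q₁ ∪ Q₂)` satisfies exactly one of:
it passes above `Q₁`; it passes below `Q₂`; it passes below `Q₁` and above `Q₂`.
(The trichotomy underlying the computation in 2.2(a): the fundamental category of the
space with two simultaneous obstructions has exactly three arrows `0 → 1`.) -/
theorem diPath_simultaneous_trichotomy (a : ℝ → ℝ × ℝ) (ha : DiPath (Q1 ∪ Q2) a) :
    (AboveQ1 a ∧ ¬ BelowQ2 a ∧ ¬ MiddleWay a) ∨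
    (¬ AboveQ1 a ∧ BelowQ2 a ∧ ¬ MiddleWay a) ∨
    (¬ AboveQ1 a ∧ ¬ BelowQ2 a ∧ MiddleWay a) := by
  obtain ⟨hc, hbox, havoid, hm1, hm2, h0, h1⟩ := ha
  have hc1 : ContinuousOn (fun t => (a t).1) (Icc 0 1) := continuous_fst.comp_continuousOn hc
  have hc2 : ContinuousOn (fun t => (a t).2) (Icc 0 1) := continuous_snd.comp_continuousOn hc
  have h01 : (0:ℝ) ≤ 1 := by norm_num
  -- the first coordinate hits every value in [0,1]
  have hit : ∀ c ∈ Icc (0:ℝ) 1, ∃ t ∈ Icc (0:ℝ) 1, (a t).1 = c := by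
    intro c hcm
    have hsub := intermediate_value_Icc h01 hc1
    have : c ∈ Icc ((a 0).1) ((a 1).1) := by rw [h0, h1]; exact hcm
    obtain ⟨t, ht, htc⟩ := hsub this
    exact ⟨t, ht, htc⟩
  obtain ⟨t3, ht3, ht3v⟩ := hit (3/10) (by norm_num)
  obtain ⟨t7, ht7, ht7v⟩ := hit (7/10) (by norm_num)
  have ht3x : (a t3).1 ∈ Ioo (1/5:ℝ) (2/5) := by rw [ht3v]; constructor <;> norm_num
  have ht7x : (a t7).1 ∈ Ioo (3/5:ℝ) (4/5) := by rw [ht7v]; constructor <;> norm_num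
  have ht37 : t3 ≤ t7 := by
    by_contra h
    push_neg at h
    have : (a t7).1 ≤ (a t3).1 := hm1 ht7 ht3 h.le
    rw [ht3v, ht7v] at this; linarith
  -- avoidance in dichotomy form
  have notQ1 : ∀ t ∈ Icc (0:ℝ) 1, (a t).1 ∈ Ioo (1/5:ℝ) (2/5) →
      (a t).2 ≤ 3/5 ∨ 4/5 ≤ (a t).2 := by
    intro t ht hx
    by_contra h
    push_neg at h
    exact havoid t ht (Or.inl ⟨hx, h.1, h.2⟩)
  have notQ2 : ∀ t ∈ Icc (0:ℝ) 1, (a t).1 ∈ Ioo (3/5:ℝ) (4/5) →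
      (a t).2 ≤ 1/5 ∨ 2/5 ≤ (a t).2 := by
    intro t ht hx
    by_contra h
    push_neg at h
    exact havoid t ht (Or.inr ⟨hx, h.1, h.2⟩)
  -- no mixing across Q1
  have noMix1 : ∀ s ∈ Icc (0:ℝ) 1, ∀ t ∈ Icc (0:ℝ) 1,
      (a s).1 ∈ Ioo (1/5:ℝ) (2/5) → (a t).1 ∈ Ioo (1/5:ℝ) (2/5) →
      (a s).2 ≤ 3/5 → 4/5 ≤ (a t).2 → False := by
    intro s hs t ht hsx htx hs2 ht2
    have hst : s ≤ t := by
      by_contra h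
      push_neg at h
      have := hm2 ht hs h.le
      linarith
    have hsub : Icc s t ⊆ Icc (0:ℝ) 1 := Icc_subset_Icc hs.1 ht.2
    have h7 : (7/10:ℝ) ∈ Icc ((a s).2) ((a t).2) := ⟨by linarith, by linarith⟩
    obtain ⟨u, hu, hu7⟩ := intermediate_value_Icc hst (hc2.mono hsub) h7
    have hu01 : u ∈ Icc (0:ℝ) 1 := hsub hu
    have hux : (a u).1 ∈ Ioo (1/5:ℝ) (2/5) :=
      ⟨lt_of_lt_of_le hsx.1 (hm1 hs hu01 hu.1), lt_of_le_of_lt (hm1 hu01 ht hu.2) htx.2⟩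
    exact havoid u hu01 (Or.inl ⟨hux, have hu7' : (a u).2 = 7/10 := hu7
      by rw [hu7']; constructor <;> norm_num⟩)
  -- no mixing across Q2
  have noMix2 : ∀ s ∈ Icc (0:ℝ) 1, ∀ t ∈ Icc (0:ℝ) 1,
      (a s).1 ∈ Ioo (3/5:ℝ) (4/5) → (a t).1 ∈ Ioo (3/5:ℝ) (4/5) →
      (a s).2 ≤ 1/5 → 2/5 ≤ (a t).2 → False := by
    intro s hs t ht hsx htx hs2 ht2
    have hst : s ≤ t := by
      by_contra h
      push_neg at h
      have := hm2 ht hs h.le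
      linarith
    have hsub : Icc s t ⊆ Icc (0:ℝ) 1 := Icc_subset_Icc hs.1 ht.2
    have h3 : (3/10:ℝ) ∈ Icc ((a s).2) ((a t).2) := ⟨by linarith, by linarith⟩
    obtain ⟨u, hu, hu3⟩ := intermediate_value_Icc hst (hc2.mono hsub) h3
    have hu01 : u ∈ Icc (0:ℝ) 1 := hsub hu
    have hux : (a u).1 ∈ Ioo (3/5:ℝ) (4/5) :=
      ⟨lt_of_lt_of_le hsx.1 (hm1 hs hu01 hu.1), lt_of_le_of_lt (hm1 hu01 ht hu.2) htx.2⟩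
    exact havoid u hu01 (Or.inr ⟨hux, have hu3' : (a u).2 = 3/10 := hu3
      by rw [hu3']; constructor <;> norm_num⟩)
  -- dichotomy at Q1
  have dich1 : AboveQ1 a ∨ (∀ t ∈ Icc (0:ℝ) 1, (a t).1 ∈ Ioo (1/5:ℝ) (2/5) → (a t).2 ≤ 3/5) := by
    by_cases hA : AboveQ1 a
    · exact Or.inl hA
    · right
      unfold AboveQ1 at hA
      push_neg at hA
      obtain ⟨s, hs, hsx, hs2⟩ := hA
      have hs2' : (a s).2 ≤ 3/5 := by
        rcases notQ1 s hs hsx with h | h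
        · exact h
        · linarith
      intro t ht htx
      rcases notQ1 t ht htx with h | h
      · exact h
      · exact absurd (noMix1 s hs t ht hsx htx hs2' h) not_false
  -- dichotomy at Q2
  have dich2 : BelowQ2 a ∨ (∀ t ∈ Icc (0:ℝ) 1, (a t).1 ∈ Ioo (3/5:ℝ) (4/5) → 2/5 ≤ (a t).2) := by
    by_cases hB : BelowQ2 a
    · exact Or.inl hB
    · right
      unfold BelowQ2 at hB
      push_neg at hB
      obtain ⟨s, hs, hsx, hs2⟩ := hB
      have hs2' : 2/5 ≤ (a s).2 := by
        rcases notQ2 s hs hsx with h | h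
        · linarith
        · exact h
      intro t ht htx
      rcases notQ2 t ht htx with h | h
      · exact absurd (noMix2 t ht s hs htx hsx h hs2') not_false
      · exact h
  -- Above Q1 excludes Below Q2
  have cross : AboveQ1 a → ¬ BelowQ2 a := by
    intro hA hB
    have h1 := hA t3 ht3 ht3x
    have h2 := hB t7 ht7 ht7x
    have := hm2 ht3 ht7 ht37
    linarith [ge_iff_le.mp h1]
  by_cases hA : AboveQ1 a
  · left
    refine ⟨hA, cross hA, ?_⟩
    intro hM
    have h1 := hA t3 ht3 ht3x
    have h2 := hM.1 t3 ht3 ht3x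
    linarith [ge_iff_le.mp h1]
  · by_cases hB : BelowQ2 a
    · right; left
      refine ⟨hA, hB, ?_⟩
      intro hM
      have h1 := hB t7 ht7 ht7x
      have h2 := hM.2 t7 ht7 ht7x
      linarith [ge_iff_le.mp h2]
    · right; right
      refine ⟨hA, hB, ?_, ?_⟩
      · rcases dich1 with h | h
        · exact absurd h hA
        · exact h
      · rcases dich2 with h | h
        · exact absurd h hB
        · exact h
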